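/- Let ı be a Young diagram (partition). A painting of type A^R on a Young diagram ı is an assignment of symbols from {•, c, d} to the boxes of ı such that: (1) removing the boxes painted d leaves a Young diagram, and removing the boxes painted c or d leaves a Young diagram; (2) every column has at most one box painted c and at most one box painted d; and (3) every column has an even number of boxes painted •. Then the number of paintings of type A^R on the transpose of a Young diagram Ǒ equals the product over i ∈ N^+ of (1 + the number of rows of Ǒ of length i). -/

import Mathlib

/-!
In a painting of type `A^ℝ` on a Young diagram `Y` with column lengths `λ`, the boxes not
painted `d` form a Young diagram with column lengths `μ`, and `λ j - 1 ≤ μ j ≤ λ j` since a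
column holds at most one `d`. Below `μ j` a column is a stack of `•`s followed by at most one
`c`, and the parity of the `•`s forces the `c` exactly when `μ j` is odd. So the painting is
determined by `μ`, and any antitone `μ` with `λ - 1 ≤ μ ≤ λ` occurs. On a block of columns
of common length `i`, such a `μ` is `i` on an initial segment and `i - 1` after it,
independently across blocks: `1 + #(block)` choices per block. For `Y = Ǒᵗ` the columns of
length `i` are the rows of `Ǒ` of length `i`.
-/

open scoped Classical

/-- The five painting symbols `•, s, r, c, d`. -/
inductive PaintSym : Type
  | bullet | s | r | c | d
deriving DecidableEq

/-- A painting on a set of boxes `cells` (cells `(i, j)` = row `i`, column `j`):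
removing the boxes painted with `{d}`, `{c,d}`, `{r,c,d}`, `{s,r,c,d}` always
leaves a Young diagram (a lower set); every row has at most one `s` and at most
one `r`; every column has at most one `c` and at most one `d`. -/
def IsPainting (cells : Finset (ℕ × ℕ)) (P : ℕ × ℕ → PaintSym) : Prop :=
  IsLowerSet {x : ℕ × ℕ | x ∈ cells ∧ P x ≠ .d} ∧
  IsLowerSet {x : ℕ × ℕ | x ∈ cells ∧ P x ≠ .d ∧ P x ≠ .c} ∧
  IsLowerSet {x : ℕ × ℕ | x ∈ cells ∧ P x ≠ .d ∧ P x ≠ .c ∧ P x ≠ .r} ∧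
  IsLowerSet {x : ℕ × ℕ | x ∈ cells ∧ P x ≠ .d ∧ P x ≠ .c ∧ P x ≠ .r ∧ P x ≠ .s} ∧
  (∀ i : ℕ, (cells.filter (fun x => x.1 = i ∧ P x = .s)).card ≤ 1) ∧
  (∀ i : ℕ, (cells.filter (fun x => x.1 = i ∧ P x = .r)).card ≤ 1) ∧
  (∀ j : ℕ, (cells.filter (fun x => x.2 = j ∧ P x = .c)).card ≤ 1) ∧
  (∀ j : ℕ, (cells.filter (fun x => x.2 = j ∧ P x = .d)).card ≤ 1)

/-- A painting of type `A^ℝ` on the Young diagram `Y`: a painting whose symbols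
are in `{•, c, d}` and such that every column of `Y` has an even number of
boxes painted `•`. -/
def IsTypeARPainting (Y : YoungDiagram) (P : ℕ × ℕ → PaintSym) : Prop :=
  IsPainting Y.cells P ∧
  (∀ x ∈ Y.cells, P x ∈ ({PaintSym.bullet, PaintSym.c, PaintSym.d} : Set PaintSym)) ∧
  (∀ j : ℕ, Even ((Y.cells.filter (fun x => x.2 = j ∧ P x = PaintSym.bullet)).card))

open Finset

theorem Finset.card_filter_card_filter_ge_le {α : Type*} [LinearOrder α] (s : Finset α) {t : ℕ}
    (ht : t ≤ #s) : #(s.filter fun j => #(s.filter (j ≤ ·)) ≤ t) = t := by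
  induction s using Finset.induction_on_max generalizing t with
  | empty =>
    simp only [card_empty, nonpos_iff_eq_zero] at ht
    simp [ht]
  | insert a s ha ih =>
    have has : a ∉ s := fun h => (ha a h).false
    cases t with
    | zero =>
      rw [card_eq_zero, filter_eq_empty_iff]
      exact fun j hj => (card_pos.2 ⟨j, mem_filter.2 ⟨hj, le_rfl⟩⟩).not_ge
    | succ t =>
      rw [card_insert_of_notMem has] at ht
      have hnew : (insert a s).filter (a ≤ ·) = {a} := by
        ext k
        simp only [mem_filter, mem_insert, mem_singleton]
        exact ⟨fun ⟨hk, hak⟩ => hk.resolve_right fun hks => (ha k hks).not_ge hak,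
          fun hk => ⟨.inl hk, hk.ge⟩⟩
      have hold : ∀ j ∈ s, #((insert a s).filter (j ≤ ·)) = #(s.filter (j ≤ ·)) + 1 := by
        intro j hj
        rw [filter_insert, if_pos (ha j hj).le, card_insert_of_notMem (by simp [has])]
      rw [filter_insert, hnew, card_singleton, if_pos (by omega),
        card_insert_of_notMem (by simp [has]),
        filter_congr fun j hj => by rw [hold j hj, Nat.add_le_add_iff_right], ih (by omega)]

/-- Column lengths `μ` of a Young diagram obtained from the one with column lengths `l` by
removing at most one box from each column. -/
def IsHorizontalStrip (l μ : ℕ → ℕ) : Prop :=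
  Antitone μ ∧ ∀ j, μ j ≤ l j ∧ l j ≤ μ j + 1

section HorizontalStrip

variable {l μ : ℕ → ℕ} {N : ℕ}

def colsOfLength (l : ℕ → ℕ) (N i : ℕ) : Finset ℕ := (range N).filter (l · = i)

lemma mem_colsOfLength (hN : ∀ j, 0 < l j ↔ j < N) {i j : ℕ} (hi : 0 < i) :
    j ∈ colsOfLength l N i ↔ l j = i := by
  simp only [colsOfLength, mem_filter, mem_range, ← hN]
  exact ⟨And.right, fun h => ⟨h ▸ hi, h⟩⟩

/-- Within a block of columns of equal length, the strip occupies the last columns, so whether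
it meets column `j` is read off from the number of boxes it has in the block. -/
lemma IsHorizontalStrip.lt_iff_card_filter_le (hμ : IsHorizontalStrip l μ)
    (hN : ∀ j, 0 < l j ↔ j < N) {j : ℕ} (hj : 0 < l j) :
    μ j < l j ↔ #((colsOfLength l N (l j)).filter (j ≤ ·)) ≤
      #((colsOfLength l N (l j)).filter (fun k => μ k < l j)) := by
  have hmem := fun k => mem_colsOfLength hN (j := k) hj
  constructor
  · intro hlt
    refine card_le_card fun k hk => ?_
    simp only [mem_filter, hmem] at hk ⊢
    exact ⟨hk.1, (hμ.1 hk.2).trans_lt hlt⟩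
  · intro hle
    by_contra hge
    have hsub : (colsOfLength l N (l j)).filter (fun k => μ k < l j) ⊆
        ((colsOfLength l N (l j)).filter (j ≤ ·)).erase j := by
      intro k hk
      simp only [mem_filter, mem_erase, hmem] at hk ⊢
      refine ⟨by rintro rfl; omega, hk.1, le_of_not_gt fun hkj => ?_⟩
      have := hμ.1 hkj.le
      omega
    have hcard := card_le_card hsub
    rw [card_erase_of_mem (by simp [hmem])] at hcard
    have : 0 < #((colsOfLength l N (l j)).filter (j ≤ ·)) :=
      card_pos.2 ⟨j, mem_filter.2 ⟨(hmem j).2 rfl, le_rfl⟩⟩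
    omega

/-- Lowers by one the last `t i` columns of the block of columns of length `i`. -/
def stripOfCounts (l : ℕ → ℕ) (N : ℕ) (t : ℕ → ℕ) (j : ℕ) : ℕ :=
  l j - if #((colsOfLength l N (l j)).filter (j ≤ ·)) ≤ t (l j) then 1 else 0

lemma isHorizontalStrip_stripOfCounts (hl : Antitone l) (t : ℕ → ℕ) :
    IsHorizontalStrip l (stripOfCounts l N t) := by
  refine ⟨fun j k hjk => ?_, fun j => by unfold stripOfCounts; split_ifs <;> omega⟩
  rcases (hl hjk).eq_or_lt with heq | hlt
  · have hsub : (colsOfLength l N (l j)).filter (k ≤ ·) ⊆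
        (colsOfLength l N (l j)).filter (j ≤ ·) :=
      monotone_filter_right _ fun _ _ hx => hjk.trans hx
    have := card_le_card hsub
    unfold stripOfCounts
    rw [heq]
    split_ifs <;> omega
  · unfold stripOfCounts
    split_ifs <;> omega

def horizontalStripEquiv (hl : Antitone l) (hN : ∀ j, 0 < l j ↔ j < N) :
    {μ // IsHorizontalStrip l μ} ≃ ((i : Icc 1 (l 0)) → Fin (1 + #(colsOfLength l N i))) where
  toFun μ i := ⟨#((colsOfLength l N i).filter (fun k => μ.1 k < i)),
    Nat.lt_one_add_iff.2 (card_filter_le _ _)⟩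
  invFun t := ⟨stripOfCounts l N (fun i => if h : i ∈ Icc 1 (l 0) then t ⟨i, h⟩ else 0),
    isHorizontalStrip_stripOfCounts hl _⟩
  left_inv μ := by
    obtain ⟨μ, hμ⟩ := μ
    refine Subtype.ext (funext fun j => ?_)
    have := hμ.2 j
    rcases Nat.eq_zero_or_pos (l j) with hj | hj
    · simp only [stripOfCounts, hj]
      omega
    · have hmem : l j ∈ Icc 1 (l 0) := mem_Icc.2 ⟨hj, hl (Nat.zero_le j)⟩
      simp only [stripOfCounts, dif_pos hmem]
      have := hμ.lt_iff_card_filter_le hN hj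
      split_ifs <;> omega
  right_inv t := by
    funext ⟨i, hi⟩
    have hi1 := (mem_Icc.1 hi).1
    refine Fin.ext ?_
    dsimp only
    rw [← card_filter_card_filter_ge_le (colsOfLength l N i)
      (Nat.lt_one_add_iff.1 (t ⟨i, hi⟩).isLt)]
    congr 1
    refine filter_congr fun k hk => ?_
    rw [mem_colsOfLength hN hi1] at hk
    subst hk
    simp only [stripOfCounts, dif_pos hi]
    split_ifs <;> omega

theorem card_isHorizontalStrip (hl : Antitone l) (hN : ∀ j, 0 < l j ↔ j < N) :
    Nat.card {μ // IsHorizontalStrip l μ} =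
      ∏ i ∈ Icc 1 (l 0), (1 + #(colsOfLength l N i)) := by
  rw [Nat.card_congr (horizontalStripEquiv hl hN), Nat.card_pi]
  simp only [Nat.card_eq_fintype_card, Fintype.card_fin]
  exact prod_coe_sort (Icc 1 (l 0)) (fun i => 1 + #(colsOfLength l N i))

end HorizontalStrip

lemma isLowerSet_setOf_fst_lt {f : ℕ → ℕ} (hf : Antitone f) :
    IsLowerSet {x : ℕ × ℕ | x.1 < f x.2} :=
  fun _ _ hba h => hba.1.trans_lt (h.trans_le (hf hba.2))

lemma YoungDiagram.colLen_eq_colLen_add_card {Y Y' : YoungDiagram} {p : ℕ × ℕ → Prop}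
    [DecidablePred p] (h : Y'.cells = Y.cells.filter p) (j : ℕ) :
    Y.colLen j = Y'.colLen j + #(Y.cells.filter fun x => x.2 = j ∧ ¬ p x) := by
  rw [Y.colLen_eq_card, Y'.colLen_eq_card, YoungDiagram.col, YoungDiagram.col, h,
    ← card_filter_add_card_filter_not (s := Y.cells.filter (·.2 = j)) p]
  simp only [filter_filter, and_comm]

section Painting

variable {Y : YoungDiagram} {μ : ℕ → ℕ} {P : ℕ × ℕ → PaintSym}

def paintOfHeights (Y : YoungDiagram) (μ : ℕ → ℕ) (x : ℕ × ℕ) : PaintSym :=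
  if x.1 < μ x.2 - μ x.2 % 2 then .bullet
  else if x.1 < μ x.2 then .c
  else if x.1 < Y.colLen x.2 then .d
  else .bullet

lemma paintOfHeights_mem (x : ℕ × ℕ) :
    paintOfHeights Y μ x ∈ ({.bullet, .c, .d} : Set PaintSym) := by
  unfold paintOfHeights
  split_ifs <;> simp

lemma paintOfHeights_eq_c_iff {x : ℕ × ℕ} :
    paintOfHeights Y μ x = .c ↔ μ x.2 - μ x.2 % 2 ≤ x.1 ∧ x.1 < μ x.2 := by
  unfold paintOfHeights
  split_ifs <;> simp <;> omega

lemma paintOfHeights_eq_d_iff {x : ℕ × ℕ} :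
    paintOfHeights Y μ x = .d ↔ μ x.2 ≤ x.1 ∧ x.1 < Y.colLen x.2 := by
  unfold paintOfHeights
  split_ifs <;> simp <;> omega

lemma paintOfHeights_of_notMem (hμ : IsHorizontalStrip Y.colLen μ) {x : ℕ × ℕ}
    (hx : x ∉ Y.cells) : paintOfHeights Y μ x = .bullet := by
  rw [YoungDiagram.mem_cells, YoungDiagram.mem_iff_lt_colLen] at hx
  have := (hμ.2 x.2).1
  unfold paintOfHeights
  split_ifs <;> first | rfl | omega

lemma isPainting_paintOfHeights (hμ : IsHorizontalStrip Y.colLen μ) :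
    IsPainting Y.cells (paintOfHeights Y μ) := by
  have hν : Antitone fun j => μ j - μ j % 2 := fun j k hjk => by
    have := hμ.1 hjk
    dsimp only
    omega
  refine ⟨?_, ?_, ?_, ?_, ?_, ?_, ?_, ?_⟩
  · convert isLowerSet_setOf_fst_lt hμ.1 using 1
    ext ⟨i, j⟩
    have := (hμ.2 j).1
    simp only [Set.mem_ofPred_eq, YoungDiagram.mem_cells, YoungDiagram.mem_iff_lt_colLen,
      paintOfHeights]
    split_ifs <;> simp <;> omega
  iterate 3
    convert isLowerSet_setOf_fst_lt hν using 1
    ext ⟨i, j⟩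
    have := (hμ.2 j).1
    simp only [Set.mem_ofPred_eq, YoungDiagram.mem_cells, YoungDiagram.mem_iff_lt_colLen,
      paintOfHeights]
    split_ifs <;> simp <;> omega
  iterate 2
    refine fun i => (card_eq_zero.2 (filter_eq_empty_iff.2 fun x _ h => ?_)).trans_le zero_le_one
    simpa [h.2] using paintOfHeights_mem (Y := Y) (μ := μ) x
  · refine fun j => card_le_one.2 fun ⟨i, k⟩ ha ⟨i', k'⟩ hb => ?_
    rw [Finset.mem_filter, paintOfHeights_eq_c_iff] at ha hb
    obtain ⟨-, rfl, ha⟩ := ha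
    obtain ⟨-, rfl, hb⟩ := hb
    dsimp only at ha hb
    exact Prod.ext (by omega) rfl
  · refine fun j => card_le_one.2 fun ⟨i, k⟩ ha ⟨i', k'⟩ hb => ?_
    rw [Finset.mem_filter, paintOfHeights_eq_d_iff] at ha hb
    have := (hμ.2 j).2
    obtain ⟨-, rfl, ha⟩ := ha
    obtain ⟨-, rfl, hb⟩ := hb
    dsimp only at ha hb this
    exact Prod.ext (by omega) rfl

lemma filter_paintOfHeights_eq_bullet (hμ : IsHorizontalStrip Y.colLen μ) (j : ℕ) :
    Y.cells.filter (fun x => x.2 = j ∧ paintOfHeights Y μ x = .bullet) =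
      range (μ j - μ j % 2) ×ˢ {j} := by
  ext ⟨i, k⟩
  rw [Finset.mem_filter, mem_product, mem_range, mem_singleton, YoungDiagram.mem_cells,
    YoungDiagram.mem_iff_lt_colLen]
  rcases eq_or_ne k j with rfl | hk
  · have := (hμ.2 k).1
    simp only [true_and, and_true, paintOfHeights]
    split_ifs <;> simp <;> omega
  · simp [hk]

theorem isTypeARPainting_paintOfHeights (hμ : IsHorizontalStrip Y.colLen μ) :
    IsTypeARPainting Y (paintOfHeights Y μ) := by
  refine ⟨isPainting_paintOfHeights hμ, fun x _ => paintOfHeights_mem x, fun j => ?_⟩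
  rw [filter_paintOfHeights_eq_bullet hμ, card_product, card_range, card_singleton, mul_one,
    Nat.even_iff]
  omega

namespace IsTypeARPainting

variable (hP : IsTypeARPainting Y P)

def nonD : YoungDiagram :=
  ⟨Y.cells.filter (P · ≠ .d), by simpa only [coe_filter] using hP.1.1⟩

def bullets : YoungDiagram :=
  ⟨hP.nonD.cells.filter (P · ≠ .c), by
    simpa only [coe_filter, nonD, Finset.mem_filter, and_assoc] using hP.1.2.1⟩

lemma mem_nonD {x : ℕ × ℕ} : x ∈ hP.nonD ↔ x ∈ Y.cells ∧ P x ≠ .d :=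
  (YoungDiagram.mem_mk _ _ _).trans Finset.mem_filter

lemma mem_bullets {x : ℕ × ℕ} : x ∈ hP.bullets ↔ x ∈ Y.cells ∧ P x = .bullet := by
  rw [bullets, YoungDiagram.mem_mk, Finset.mem_filter, YoungDiagram.mem_cells (μ := hP.nonD),
    mem_nonD]
  constructor
  · rintro ⟨⟨hx, hd⟩, hc⟩
    exact ⟨hx, by simpa [hd, hc] using hP.2.1 x hx⟩
  · rintro ⟨hx, hb⟩
    simp [hx, hb]

lemma colLen_eq_colLen_nonD_add (j : ℕ) :
    Y.colLen j = hP.nonD.colLen j + #(Y.cells.filter fun x => x.2 = j ∧ P x = .d) := by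
  simpa only [ne_eq, not_not] using YoungDiagram.colLen_eq_colLen_add_card (Y' := hP.nonD) rfl j

lemma colLen_nonD_eq_colLen_bullets_add (j : ℕ) :
    hP.nonD.colLen j = hP.bullets.colLen j + #(Y.cells.filter fun x => x.2 = j ∧ P x = .c) := by
  rw [YoungDiagram.colLen_eq_colLen_add_card (Y' := hP.bullets) rfl j]
  congr 2
  ext x
  simp only [Finset.mem_filter, YoungDiagram.mem_cells, mem_nonD, ne_eq, not_not]
  constructor
  · rintro ⟨⟨hx, -⟩, hj, hc⟩
    exact ⟨hx, hj, hc⟩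
  · rintro ⟨hx, hj, hc⟩
    exact ⟨⟨hx, by simp [hc]⟩, hj, hc⟩

lemma even_colLen_bullets (j : ℕ) : Even (hP.bullets.colLen j) := by
  rw [YoungDiagram.colLen_eq_card, YoungDiagram.col]
  convert hP.2.2 j using 2
  ext x
  simp only [Finset.mem_filter, YoungDiagram.mem_cells, mem_bullets, and_assoc]
  exact ⟨fun ⟨hx, hb, hj⟩ => ⟨hx, hj, hb⟩, fun ⟨hx, hj, hb⟩ => ⟨hx, hb, hj⟩⟩

theorem isHorizontalStrip_colLen_nonD : IsHorizontalStrip Y.colLen hP.nonD.colLen := by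
  refine ⟨fun j k h => hP.nonD.colLen_anti j k h, fun j => ?_⟩
  have := hP.colLen_eq_colLen_nonD_add j
  have := hP.1.2.2.2.2.2.2.2 j
  omega

lemma colLen_bullets (j : ℕ) :
    hP.bullets.colLen j = hP.nonD.colLen j - hP.nonD.colLen j % 2 := by
  have := hP.colLen_nonD_eq_colLen_bullets_add j
  have := hP.1.2.2.2.2.2.2.1 j
  obtain ⟨m, hm⟩ := hP.even_colLen_bullets j
  omega

theorem eq_paintOfHeights (hout : ∀ x ∉ Y.cells, P x = .bullet) :
    P = paintOfHeights Y hP.nonD.colLen := by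
  funext ⟨i, j⟩
  by_cases hx : (i, j) ∈ Y.cells
  · have hd : P (i, j) ≠ .d ↔ i < hP.nonD.colLen j := by
      rw [← YoungDiagram.mem_iff_lt_colLen, mem_nonD, and_iff_right hx]
    have hb : P (i, j) = .bullet ↔ i < hP.nonD.colLen j - hP.nonD.colLen j % 2 := by
      rw [← colLen_bullets, ← YoungDiagram.mem_iff_lt_colLen, mem_bullets, and_iff_right hx]
    have hl : i < Y.colLen j := YoungDiagram.mem_iff_lt_colLen.1 hx
    have hsym : P (i, j) = .bullet ∨ P (i, j) = .c ∨ P (i, j) = .d := by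
      simpa using hP.2.1 _ hx
    unfold paintOfHeights
    obtain h | h | h := hsym <;>
      simp only [h, ne_eq, reduceCtorEq, not_false_eq_true, not_true_eq_false, true_iff,
        false_iff] at hd hb ⊢ <;>
      split_ifs <;> rfl
  · rw [hout _ hx, paintOfHeights_of_notMem hP.isHorizontalStrip_colLen_nonD hx]

end IsTypeARPainting

theorem colLen_nonD_paintOfHeights (hμ : IsHorizontalStrip Y.colLen μ) :
    (isTypeARPainting_paintOfHeights hμ).nonD.colLen = μ := by
  funext j
  refine eq_of_forall_lt_iff fun i => ?_
  rw [← YoungDiagram.mem_iff_lt_colLen, IsTypeARPainting.mem_nonD, YoungDiagram.mem_cells,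
    YoungDiagram.mem_iff_lt_colLen, ne_eq, paintOfHeights_eq_d_iff]
  have := (hμ.2 j).1
  dsimp only
  omega

end Painting

def typeARPaintingEquiv (Y : YoungDiagram) :
    {P : ℕ × ℕ → PaintSym // IsTypeARPainting Y P ∧ ∀ x ∉ Y.cells, P x = .bullet} ≃
      {μ // IsHorizontalStrip Y.colLen μ} where
  toFun P := ⟨P.2.1.nonD.colLen, P.2.1.isHorizontalStrip_colLen_nonD⟩
  invFun μ := ⟨paintOfHeights Y μ, isTypeARPainting_paintOfHeights μ.2,
    fun _ hx => paintOfHeights_of_notMem μ.2 hx⟩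
  left_inv P := Subtype.ext (P.2.1.eq_paintOfHeights P.2.2).symm
  right_inv μ := Subtype.ext (colLen_nonD_paintOfHeights μ.2)

theorem card_typeARPaintings (Y : YoungDiagram) :
    Nat.card {P : ℕ × ℕ → PaintSym //
        IsTypeARPainting Y P ∧ ∀ x ∉ Y.cells, P x = .bullet} =
      ∏ i ∈ Icc 1 (Y.colLen 0), (1 + #(colsOfLength Y.colLen (Y.rowLen 0) i)) := by
  rw [Nat.card_congr (typeARPaintingEquiv Y)]
  refine card_isHorizontalStrip (fun j k h => Y.colLen_anti j k h) fun j => ?_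
  rw [← YoungDiagram.mem_iff_lt_colLen, YoungDiagram.mem_iff_lt_rowLen]

/-- The number of paintings of type `A^ℝ` on the transpose `Ǒᵗ` equals the
product over `i ∈ ℕ⁺` of `1 + (number of rows of length i in Ǒ)`. -/
theorem card_typeAR_paintings (O : YoungDiagram) :
    Nat.card {P : ℕ × ℕ → PaintSym //
        IsTypeARPainting O.transpose P ∧ ∀ x ∉ O.transpose.cells, P x = PaintSym.bullet} =
      ∏ i ∈ Finset.Icc 1 (O.rowLen 0),
        (1 + ((Finset.range (O.colLen 0)).filter (fun k => O.rowLen k = i)).card) := by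
  rw [card_typeARPaintings]
  simp only [colsOfLength, YoungDiagram.colLen_transpose, YoungDiagram.rowLen_transpose]
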